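/- In a Hopf quasigroup H, if S and S' are two linear maps each satisfying the Hopf quasigroup antipode axioms (S(h₍₁₎)(h₍₂₎g) = h₍₁₎(S(h₍₂₎)g) = ε(h)g and (gS(h₍₁₎))h₍₂₎ = (gh₍₁₎)S(h₍₂₎) = ε(h)g for all g, h), then S = S'. -/

import Mathlib

open TensorProduct

/-- The data of a Hopf quasigroup without its antipode: a unital (possibly nonassociative)
algebra together with a coassociative counital comultiplication which, together with the
counit, is an algebra homomorphism. Everything is expressed in terms of linear maps, so that
Sweedler-notation identities become equalities of composites of linear maps. -/
structure HopfQuasigroupData (k H : Type*) [Field k] [AddCommGroup H] [Module k H] where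
  /-- the (possibly nonassociative) multiplication -/
  mul : H ⊗[k] H →ₗ[k] H
  /-- the unit element -/
  one : H
  /-- the comultiplication -/
  comul : H →ₗ[k] H ⊗[k] H
  /-- the counit -/
  counit : H →ₗ[k] k
  one_mul : ∀ x : H, mul (one ⊗ₜ[k] x) = x
  mul_one : ∀ x : H, mul (x ⊗ₜ[k] one) = x
  coassoc : (TensorProduct.assoc k H H H).toLinearMap ∘ₗ comul.rTensor H ∘ₗ comul =
    comul.lTensor H ∘ₗ comul
  counit_comul : (TensorProduct.lid k H).toLinearMap ∘ₗ counit.rTensor H ∘ₗ comul =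
    LinearMap.id
  comul_counit : (TensorProduct.rid k H).toLinearMap ∘ₗ counit.lTensor H ∘ₗ comul =
    LinearMap.id
  comul_mul : comul ∘ₗ mul = TensorProduct.map mul mul ∘ₗ
    (TensorProduct.tensorTensorTensorComm k H H H H).toLinearMap ∘ₗ
      TensorProduct.map comul comul
  comul_one : comul one = one ⊗ₜ[k] one
  counit_mul : ∀ x y : H, counit (mul (x ⊗ₜ[k] y)) = counit x * counit y
  counit_one : counit one = 1

namespace HopfQuasigroupData

variable {k H : Type*} [Field k] [AddCommGroup H] [Module k H]

/-- The linear map `h ⊗ g ↦ ε(h)g`. -/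
noncomputable def εl (D : HopfQuasigroupData k H) : H ⊗[k] H →ₗ[k] H :=
  (TensorProduct.lid k H).toLinearMap ∘ₗ D.counit.rTensor H

/-- The linear map `g ⊗ h ↦ ε(h)g`. -/
noncomputable def εr (D : HopfQuasigroupData k H) : H ⊗[k] H →ₗ[k] H :=
  (TensorProduct.rid k H).toLinearMap ∘ₗ D.counit.lTensor H

/-- `S` is an antipode for the Hopf quasigroup data `D`:
`Σ S(h₁)(h₂g) = Σ h₁(S(h₂)g) = ε(h)g` and `Σ (gS(h₁))h₂ = Σ (gh₁)S(h₂) = ε(h)g`. -/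
def IsAntipode (D : HopfQuasigroupData k H) (S : H →ₗ[k] H) : Prop :=
  (D.mul ∘ₗ TensorProduct.map S D.mul ∘ₗ (TensorProduct.assoc k H H H).toLinearMap ∘ₗ
      D.comul.rTensor H = D.εl) ∧
  (D.mul ∘ₗ TensorProduct.map LinearMap.id (D.mul ∘ₗ S.rTensor H) ∘ₗ
      (TensorProduct.assoc k H H H).toLinearMap ∘ₗ D.comul.rTensor H = D.εl) ∧
  (D.mul ∘ₗ TensorProduct.map (D.mul ∘ₗ S.lTensor H) LinearMap.id ∘ₗ
      (TensorProduct.assoc k H H H).symm.toLinearMap ∘ₗ D.comul.lTensor H = D.εr) ∧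
  (D.mul ∘ₗ TensorProduct.map D.mul S ∘ₗ
      (TensorProduct.assoc k H H H).symm.toLinearMap ∘ₗ D.comul.lTensor H = D.εr)

end HopfQuasigroupData

namespace HopfQuasigroupData

variable {k H : Type*} [Field k] [AddCommGroup H] [Module k H] {D : HopfQuasigroupData k H}
  {S S' : H →ₗ[k] H}

theorem εl_comp_comul (D : HopfQuasigroupData k H) : D.εl ∘ₗ D.comul = LinearMap.id :=
  D.counit_comul

theorem εr_comp_comul (D : HopfQuasigroupData k H) : D.εr ∘ₗ D.comul = LinearMap.id :=
  D.comul_counit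

/-- The last antipode axiom at `g = 1`. -/
theorem IsAntipode.mul_lTensor_comul (hS : D.IsAntipode S) (h : H) :
    D.mul (S.lTensor H (D.comul h)) = D.counit h • D.one := by
  have hOne := LinearMap.congr_fun hS.2.2.2 (D.one ⊗ₜ[k] h)
  have unit_left : ∀ x : H ⊗[k] H, D.mul (TensorProduct.map D.mul S
      ((TensorProduct.assoc k H H H).symm (D.one ⊗ₜ[k] x))) = D.mul (S.lTensor H x) := by
    intro x
    induction x using TensorProduct.induction_on with
    | zero => simp
    | tmul a b => simp [D.one_mul]
    | add x y hx hy => simp only [TensorProduct.tmul_add, map_add, hx, hy]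
  simpa [εr, unit_left, TensorProduct.smul_tmul] using hOne

/-- `a ⊗ (b ⊗ c) ↦ S(a) (b S'(c))`. On the triple coproduct `h₁ ⊗ h₂ ⊗ h₃` it collapses to
`S(h)` by the right axioms of `S'` and, bracketing the coproduct the other way, to `S'(h)` by the
left axioms of `S`. -/
noncomputable def sandwich (D : HopfQuasigroupData k H) (S S' : H →ₗ[k] H) :
    H ⊗[k] (H ⊗[k] H) →ₗ[k] H :=
  D.mul ∘ₗ TensorProduct.map S (D.mul ∘ₗ S'.lTensor H)

theorem sandwich_comp_lTensor_comul (hS' : D.IsAntipode S') :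
    D.sandwich S S' ∘ₗ D.comul.lTensor H = S ∘ₗ D.εr := by
  refine TensorProduct.ext' fun a b => ?_
  simp [sandwich, εr, hS'.mul_lTensor_comul, TensorProduct.tmul_smul, D.mul_one]

theorem sandwich_comp_assoc_rTensor_comul (hS : D.IsAntipode S) :
    D.sandwich S S' ∘ₗ (TensorProduct.assoc k H H H).toLinearMap ∘ₗ D.comul.rTensor H =
      S' ∘ₗ D.εl := by
  have factor : D.sandwich S S' ∘ₗ (TensorProduct.assoc k H H H).toLinearMap =
      (D.mul ∘ₗ TensorProduct.map S D.mul ∘ₗ (TensorProduct.assoc k H H H).toLinearMap) ∘ₗ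
        S'.lTensor (H ⊗[k] H) :=
    TensorProduct.ext_threefold fun a b c => by simp [sandwich]
  have commute : S'.lTensor (H ⊗[k] H) ∘ₗ D.comul.rTensor H =
      D.comul.rTensor H ∘ₗ S'.lTensor H :=
    (LinearMap.lTensor_comp_rTensor _ _ _).trans (LinearMap.rTensor_comp_lTensor _ _ _).symm
  have εl_natural : D.εl ∘ₗ S'.lTensor H = S' ∘ₗ D.εl :=
    TensorProduct.ext' fun a b => by simp [εl]
  calc D.sandwich S S' ∘ₗ (TensorProduct.assoc k H H H).toLinearMap ∘ₗ D.comul.rTensor H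
      = (D.mul ∘ₗ TensorProduct.map S D.mul ∘ₗ (TensorProduct.assoc k H H H).toLinearMap ∘ₗ
          D.comul.rTensor H) ∘ₗ S'.lTensor H := by
        rw [← LinearMap.comp_assoc, factor, LinearMap.comp_assoc, commute]
        simp only [LinearMap.comp_assoc]
    _ = S' ∘ₗ D.εl := by rw [hS.1, εl_natural]

end HopfQuasigroupData

/-- In a Hopf quasigroup, two linear maps each satisfying the Hopf quasigroup
antipode axioms must coincide: the antipode is unique. -/
theorem hopfQuasigroup_antipode_unique {k H : Type*} [Field k] [AddCommGroup H] [Module k H]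
    (D : HopfQuasigroupData k H) (S S' : H →ₗ[k] H)
    (hS : D.IsAntipode S) (hS' : D.IsAntipode S') : S = S' :=
  calc S = S ∘ₗ D.εr ∘ₗ D.comul := by rw [D.εr_comp_comul, LinearMap.comp_id]
    _ = D.sandwich S S' ∘ₗ D.comul.lTensor H ∘ₗ D.comul := by
        rw [← LinearMap.comp_assoc, ← D.sandwich_comp_lTensor_comul hS', LinearMap.comp_assoc]
    _ = D.sandwich S S' ∘ₗ (TensorProduct.assoc k H H H).toLinearMap ∘ₗ
          D.comul.rTensor H ∘ₗ D.comul := by rw [D.coassoc]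
    _ = S' ∘ₗ D.εl ∘ₗ D.comul := by
        rw [← LinearMap.comp_assoc, ← LinearMap.comp_assoc,
          LinearMap.comp_assoc _ _ (D.sandwich S S'), D.sandwich_comp_assoc_rTensor_comul hS]
        simp only [LinearMap.comp_assoc]
    _ = S' := by rw [D.εl_comp_comul, LinearMap.comp_id]
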